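/- arXiv:1804.09097 — 5 statements merged into one kernel-verified Lean document; each statement's English description precedes it below -/
import Mathlib

section
/- Let 0 ≤ δ ≤ 0.04 and 0 ≤ ν ≤ 0.04. Then 1/2 ≤ sin(ω_sup) ≤ 1. -/
noncomputable def Cdelta (δ : ℝ) : ℝ :=
  1.1 * (Real.sqrt (2 / (1 - δ ^ 2)) + 1 / (1 - δ)) /
    (1 - Real.sqrt (2 / (1 - δ ^ 2)) * δ)

noncomputable def omegaSup (δ ν : ℝ) : ℝ :=
  sSup {ω : ℝ | ω ∈ Set.Ico 0 (Real.pi / 2) ∧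
    Real.arcsin (Cdelta δ * (δ * Real.tan ω + (1 + δ) * ν * (1 / Real.cos ω))) ≤ ω}

set_option maxHeartbeats 1000000 in
theorem sin_omegaSup_ge_half (δ ν : ℝ) (hδ0 : 0 ≤ δ) (hδ : δ ≤ 0.04)
    (hν0 : 0 ≤ ν) (hν : ν ≤ 0.04) :
    1 / 2 ≤ Real.sin (omegaSup δ ν) ∧ Real.sin (omegaSup δ ν) ≤ 1 := by
  have hπ := Real.pi_pos
  have hπ2 : Real.pi ≤ 4 := Real.pi_le_four
  -- bounds on sqrt term
  set q := Real.sqrt (2 / (1 - δ ^ 2)) with hq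
  have hq0 : 0 ≤ q := Real.sqrt_nonneg _
  have hden : (0.9984 : ℝ) ≤ 1 - δ ^ 2 := by nlinarith
  have hqle : q ≤ 1.42 := by
    rw [hq, show (1.42:ℝ) = Real.sqrt (1.42 ^ 2) from (Real.sqrt_sq (by norm_num)).symm]
    apply Real.sqrt_le_sqrt
    rw [div_le_iff₀ (by nlinarith)]
    nlinarith
  have hdel : (1:ℝ)/(1 - δ) ≤ 1.05 := by
    rw [div_le_iff₀ (by nlinarith)]; nlinarith
  have hdel0 : (0:ℝ) ≤ 1/(1-δ) := div_nonneg zero_le_one (by nlinarith)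
  have hD : (0.94 : ℝ) ≤ 1 - q * δ := by nlinarith
  have hDle : 1 - q * δ ≤ 1 := by nlinarith
  have hC0 : 0 ≤ Cdelta δ := by
    unfold Cdelta; rw [← hq]; positivity
  have hC : Cdelta δ ≤ 3 := by
    unfold Cdelta; rw [← hq, div_le_iff₀ (by nlinarith)]
    nlinarith
  -- bound the argument at ω = π/6
  have hs3 : (1.73 : ℝ) ≤ Real.sqrt 3 := by
    rw [show (1.73:ℝ) = Real.sqrt (1.73 ^ 2) from (Real.sqrt_sq (by norm_num)).symm]
    apply Real.sqrt_le_sqrt; norm_num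
  have hs30 : (0:ℝ) < Real.sqrt 3 := by positivity
  have htan : Real.tan (Real.pi / 6) ≤ 0.58 := by
    rw [Real.tan_pi_div_six, div_le_iff₀ hs30]; nlinarith
  have htan0 : 0 ≤ Real.tan (Real.pi / 6) := by
    rw [Real.tan_pi_div_six]; positivity
  have hsec : 1 / Real.cos (Real.pi / 6) ≤ 1.16 := by
    rw [Real.cos_pi_div_six, one_div, inv_le_comm₀ (by positivity) (by norm_num)]
    nlinarith
  have hsec0 : 0 ≤ 1 / Real.cos (Real.pi / 6) := by
    rw [Real.cos_pi_div_six]; positivity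
  have harg : Cdelta δ * (δ * Real.tan (Real.pi/6) +
      (1 + δ) * ν * (1 / Real.cos (Real.pi/6))) ≤ 1/2 := by
    have h1 : δ * Real.tan (Real.pi/6) ≤ 0.04 * 0.58 := by
      apply mul_le_mul hδ htan htan0 (by norm_num)
    have h2 : (1 + δ) * ν * (1 / Real.cos (Real.pi/6)) ≤ 1.04 * 0.04 * 1.16 := by
      apply mul_le_mul _ hsec hsec0 (by norm_num)
      apply mul_le_mul (by linarith) hν hν0 (by norm_num)
    have h3 : 0 ≤ δ * Real.tan (Real.pi/6) + (1 + δ) * ν * (1 / Real.cos (Real.pi/6)) := by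
      positivity
    nlinarith
  -- the membership
  have hmem : Real.pi / 6 ∈ {ω : ℝ | ω ∈ Set.Ico 0 (Real.pi / 2) ∧
      Real.arcsin (Cdelta δ * (δ * Real.tan ω + (1 + δ) * ν * (1 / Real.cos ω))) ≤ ω} := by
    refine ⟨⟨by positivity, by linarith⟩, ?_⟩
    rw [Real.arcsin_le_iff_le_sin' ⟨by linarith, by linarith⟩, Real.sin_pi_div_six]
    exact harg
  have hbdd : BddAbove {ω : ℝ | ω ∈ Set.Ico 0 (Real.pi / 2) ∧
      Real.arcsin (Cdelta δ * (δ * Real.tan ω + (1 + δ) * ν * (1 / Real.cos ω))) ≤ ω} :=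
    ⟨Real.pi / 2, fun ω hω => le_of_lt hω.1.2⟩
  have h1 : Real.pi / 6 ≤ omegaSup δ ν := le_csSup hbdd hmem
  have h2 : omegaSup δ ν ≤ Real.pi / 2 :=
    csSup_le ⟨_, hmem⟩ (fun ω hω => le_of_lt hω.1.2)
  refine ⟨?_, Real.sin_le_one _⟩
  rw [← Real.sin_pi_div_six]
  apply Real.strictMonoOn_sin.monotoneOn ⟨by linarith, by linarith⟩ ⟨by linarith, h2⟩ h1
end

section
/- Let 0 ≤ δ ≤ 0.04 and 0 ≤ ν ≤ 0.04. Then sin(ω_sup) ≥ √(1 − C_δ²·(δ + 2δν + 2ν)²). -/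
lemma aux_sqrt_bound (δ : ℝ) (hδ0 : 0 ≤ δ) (hδ : δ ≤ 0.04) :
    Real.sqrt (2 / (1 - δ ^ 2)) ≤ 1.416 := by
  have h1 : (0.9984 : ℝ) ≤ 1 - δ ^ 2 := by nlinarith
  have h2 : 2 / (1 - δ ^ 2) ≤ 2.004 := by
    rw [div_le_iff₀ (by linarith)]; nlinarith
  calc Real.sqrt (2 / (1 - δ ^ 2)) ≤ Real.sqrt 2.004 := Real.sqrt_le_sqrt h2
    _ ≤ 1.416 := by
        rw [show (1.416 : ℝ) = Real.sqrt (1.416 ^ 2) by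
          rw [Real.sqrt_sq (by norm_num)]]
        exact Real.sqrt_le_sqrt (by norm_num)

lemma aux_Cdelta_pos (δ : ℝ) (hδ0 : 0 ≤ δ) (hδ : δ ≤ 0.04) : 0 < Cdelta δ := by
  have ha0 : 0 ≤ Real.sqrt (2 / (1 - δ ^ 2)) := Real.sqrt_nonneg _
  have ha : Real.sqrt (2 / (1 - δ ^ 2)) ≤ 1.416 := aux_sqrt_bound δ hδ0 hδ
  have hb : (0 : ℝ) < 1 / (1 - δ) := by
    apply one_div_pos.mpr; linarith
  apply div_pos
  · nlinarith
  · nlinarith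

lemma aux_Cdelta_le (δ : ℝ) (hδ0 : 0 ≤ δ) (hδ : δ ≤ 0.04) : Cdelta δ ≤ 3 := by
  have ha0 : 0 ≤ Real.sqrt (2 / (1 - δ ^ 2)) := Real.sqrt_nonneg _
  have ha : Real.sqrt (2 / (1 - δ ^ 2)) ≤ 1.416 := aux_sqrt_bound δ hδ0 hδ
  have hb : 1 / (1 - δ) ≤ 1 / 0.96 :=
    one_div_le_one_div_of_le (by norm_num) (by linarith)
  have hb0 : (0 : ℝ) < 1 / (1 - δ) := by
    apply one_div_pos.mpr; linarith
  have hN : 1.1 * (Real.sqrt (2 / (1 - δ ^ 2)) + 1 / (1 - δ)) ≤ 2.73 := by nlinarith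
  have hD : (0.943 : ℝ) ≤ 1 - Real.sqrt (2 / (1 - δ ^ 2)) * δ := by nlinarith
  calc Cdelta δ ≤ 2.73 / 0.943 :=
        div_le_div₀ (by norm_num) hN (by norm_num) hD
    _ ≤ 3 := by norm_num

theorem sin_omegaSup_sqrt_lower_bound (δ ν : ℝ) (hδ0 : 0 ≤ δ) (hδ : δ ≤ 0.04)
    (hν0 : 0 ≤ ν) (hν : ν ≤ 0.04) :
    Real.sqrt (1 - Cdelta δ ^ 2 * (δ + 2 * δ * ν + 2 * ν) ^ 2) ≤ Real.sin (omegaSup δ ν) := by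
  have hC0 : 0 < Cdelta δ := aux_Cdelta_pos δ hδ0 hδ
  have hC3 : Cdelta δ ≤ 3 := aux_Cdelta_le δ hδ0 hδ
  set C := Cdelta δ with hCdef
  set K := C * (δ + 2 * δ * ν + 2 * ν) with hKdef
  have hK0 : 0 ≤ K := by positivity
  have hKle : K ≤ 0.37 := by
    rw [hKdef]
    have hsum : δ + 2 * δ * ν + 2 * ν ≤ 0.1232 := by nlinarith
    have hsum0 : 0 ≤ δ + 2 * δ * ν + 2 * ν := by positivity
    calc C * (δ + 2 * δ * ν + 2 * ν) ≤ 3 * 0.1232 :=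
          mul_le_mul hC3 hsum hsum0 (by norm_num)
      _ ≤ 0.37 := by norm_num
  rw [omegaSup]
  rcases eq_or_lt_of_le hK0 with hKz | hKpos
  · -- degenerate case: δ = 0 and ν = 0
    have hsum : δ + 2 * δ * ν + 2 * ν = 0 := by
      rcases mul_eq_zero.mp hKz.symm with h | h
      · exact absurd h (ne_of_gt hC0)
      · exact h
    have hd0 : δ = 0 := by nlinarith
    have hn0 : ν = 0 := by nlinarith
    subst hd0; subst hn0
    have hS : {ω : ℝ | ω ∈ Set.Ico 0 (Real.pi / 2) ∧
        Real.arcsin (C * ((0 : ℝ) * Real.tan ω + (1 + 0) * 0 * (1 / Real.cos ω))) ≤ ω}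
        = Set.Ico (0 : ℝ) (Real.pi / 2) := by
      ext ω
      simp [Real.arcsin_zero, Set.mem_Ico]
      intro h _; exact h
    rw [hS, csSup_Ico (by positivity), Real.sin_pi_div_two]
    simp
  · -- main case: K > 0
    set S := {ω : ℝ | ω ∈ Set.Ico 0 (Real.pi / 2) ∧
      Real.arcsin (C * (δ * Real.tan ω + (1 + δ) * ν * (1 / Real.cos ω))) ≤ ω} with hSdef
    set ω₀ := Real.arccos K with hw
    have hK1 : K ≤ 1 := by linarith
    have hcos : Real.cos ω₀ = K := Real.cos_arccos (by linarith) hK1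
    have hsin : Real.sin ω₀ = Real.sqrt (1 - K ^ 2) := Real.sin_arccos K
    have hw0 : 0 ≤ ω₀ := Real.arccos_nonneg K
    have hwlt : ω₀ < Real.pi / 2 := Real.arccos_lt_pi_div_two.mpr hKpos
    set s := Real.sqrt (1 - K ^ 2) with hsdef
    have hs0 : 0 ≤ s := Real.sqrt_nonneg _
    have hs2 : 1 / 2 ≤ s := by
      rw [hsdef, Real.le_sqrt (by norm_num) (by nlinarith)]
      nlinarith
    have hmem : ω₀ ∈ S := by
      refine ⟨⟨hw0, hwlt⟩, ?_⟩
      have harg : C * (δ * Real.tan ω₀ + (1 + δ) * ν * (1 / Real.cos ω₀)) ≤ Real.sin ω₀ := by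
        rw [Real.tan_eq_sin_div_cos, hcos, hsin]
        have heq : C * (δ * (s / K) + (1 + δ) * ν * (1 / K))
            = C * (δ * s + (1 + δ) * ν) / K := by
          field_simp
        rw [heq, div_le_iff₀ hKpos]
        have hcν : 0 ≤ C * ((1 + δ) * ν) := by positivity
        nlinarith [mul_nonneg hcν (by linarith : (0 : ℝ) ≤ 2 * s - 1)]
      have := Real.monotone_arcsin harg
      rwa [Real.arcsin_sin (by linarith [Real.pi_div_two_pos]) (le_of_lt hwlt)] at this
    have hbdd : BddAbove S := ⟨Real.pi / 2, fun x hx => le_of_lt hx.1.2⟩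
    have hne : S.Nonempty := ⟨ω₀, hmem⟩
    have hle : ω₀ ≤ sSup S := le_csSup hbdd hmem
    have hsup_le : sSup S ≤ Real.pi / 2 := csSup_le hne (fun x hx => le_of_lt hx.1.2)
    have hmono : Real.sin ω₀ ≤ Real.sin (sSup S) := by
      apply Real.strictMonoOn_sin.monotoneOn
      · exact ⟨by linarith, le_of_lt hwlt⟩
      · exact ⟨by linarith, hsup_le⟩
      · exact hle
    have hKsq : C ^ 2 * (δ + 2 * δ * ν + 2 * ν) ^ 2 = K ^ 2 := by
      rw [hKdef]; ring
    rw [hKsq]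
    calc Real.sqrt (1 - K ^ 2) = Real.sin ω₀ := hsin.symm
      _ ≤ Real.sin (sSup S) := hmono
end

section
/- Let 0 < δ ≤ 0.04 and 0 ≤ ν ≤ 0.04. Then ω_sup < π/2 and ω_sup satisfies the fixed-point equation sin(ω_sup) = C_δ·(δ·tan(ω_sup) + (1+δ)·ν·sec(ω_sup)); equivalently, ω_sup = arcsin(C_δ·(δ·tan(ω_sup) + (1+δ)·ν·sec(ω_sup))). -/
/-!
Multiplying the defining inequality `C (δ tan ω + (1 + δ) ν sec ω) ≤ sin ω` by `cos ω > 0` turns it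
into `a sin ω + b ≤ sin ω cos ω` with `a = C δ`, `b = C (1 + δ) ν`, a condition on a continuous
function. For `δ, ν ≤ 0.04` one has `C ≤ 2.88`, so `a + b ≤ 1/2` and `π/4` satisfies it, while no
`ω > arccos a` does. Hence the supremum lies strictly below `π/2`; the continuous gap
`sin ω cos ω - a sin ω - b` is `≥ 0` there by closedness and `≤ 0` because otherwise slightly
larger angles would qualify, so equality, i.e. the fixed-point equation, holds at the supremum.
-/

open Real Set Filter Topology

theorem Continuous.apply_sSup_Ico_eq_zero {f : ℝ → ℝ} (hf : Continuous f) {l u : ℝ}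
    (hne : {x | x ∈ Ico l u ∧ 0 ≤ f x}.Nonempty) (hlt : sSup {x | x ∈ Ico l u ∧ 0 ≤ f x} < u) :
    f (sSup {x | x ∈ Ico l u ∧ 0 ≤ f x}) = 0 := by
  set S := {x | x ∈ Ico l u ∧ 0 ≤ f x}
  have hbdd : BddAbove S := ⟨u, fun x hx => hx.1.2.le⟩
  have hl : l ≤ sSup S := by
    obtain ⟨x, hx⟩ := hne
    exact hx.1.1.trans (le_csSup hbdd hx)
  refine le_antisymm (not_lt.1 fun hpos => ?_) ?_
  · have hnear : ∀ᶠ x in 𝓝[>] sSup S, 0 < f x ∧ x < u :=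
      nhdsWithin_le_nhds ((hf.continuousAt.eventually (lt_mem_nhds hpos)).and (gt_mem_nhds hlt))
    obtain ⟨x, ⟨hfx, hxu⟩, hx⟩ := (hnear.and self_mem_nhdsWithin).exists
    have hxS : x ∈ S := ⟨⟨hl.trans (le_of_lt hx), hxu⟩, hfx.le⟩
    exact (not_le.2 (mem_Ioi.1 hx)) (le_csSup hbdd hxS)
  · have hclosed : IsClosed {x | 0 ≤ f x} := isClosed_le continuous_const hf
    exact closure_minimal (fun x hx => hx.2) hclosed (csSup_mem_closure hne hbdd)

namespace OmegaSup

noncomputable def gap (a b ω : ℝ) : ℝ := sin ω * cos ω - a * sin ω - b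

theorem continuous_gap (a b : ℝ) : Continuous (gap a b) := by
  unfold gap
  fun_prop

theorem gap_pi_div_four_nonneg {a b : ℝ} (ha : 0 ≤ a) (hab : a + b ≤ 1 / 2) :
    0 ≤ gap a b (π / 4) := by
  have hsin : sin (π / 4) ≤ 1 := sin_le_one _
  have hsc : sin (π / 4) * cos (π / 4) = 1 / 2 := by
    rw [sin_pi_div_four, cos_pi_div_four, div_mul_div_comm, mul_self_sqrt zero_le_two]
    norm_num
  unfold gap
  nlinarith

theorem le_arccos_of_gap_nonneg {a b ω : ℝ} (ha : -1 ≤ a) (ha' : a ≤ 1) (hb : 0 ≤ b)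
    (hω : ω ∈ Ico 0 π) (h : 0 ≤ gap a b ω) : ω ≤ arccos a := by
  by_contra! hgt
  have hcos : cos ω < a := by
    rw [← cos_arccos ha ha']
    exact cos_lt_cos_of_nonneg_of_le_pi (arccos_nonneg a) hω.2.le hgt
  have hsin : 0 < sin ω := sin_pos_of_pos_of_lt_pi ((arccos_nonneg a).trans_lt hgt) hω.2
  unfold gap at h
  nlinarith

theorem mul_cos_eq (C δ ν : ℝ) {ω : ℝ} (hω : cos ω ≠ 0) :
    C * (δ * tan ω + (1 + δ) * ν * (1 / cos ω)) * cos ω = C * δ * sin ω + C * (1 + δ) * ν := by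
  rw [tan_eq_sin_div_cos]
  field_simp

theorem arcsin_le_iff_gap_nonneg (C δ ν : ℝ) {ω : ℝ} (hω : ω ∈ Ioo (-(π / 2)) (π / 2)) :
    arcsin (C * (δ * tan ω + (1 + δ) * ν * (1 / cos ω))) ≤ ω ↔
      0 ≤ gap (C * δ) (C * (1 + δ) * ν) ω := by
  have hcos := cos_pos_of_mem_Ioo hω
  rw [arcsin_le_iff_le_sin' ⟨hω.1.le, hω.2⟩, ← mul_le_mul_iff_of_pos_right hcos,
    mul_cos_eq C δ ν hcos.ne', gap, sub_sub, sub_nonneg]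

theorem sin_eq_of_gap_eq_zero (C δ ν : ℝ) {ω : ℝ} (hω : cos ω ≠ 0)
    (h : gap (C * δ) (C * (1 + δ) * ν) ω = 0) :
    sin ω = C * (δ * tan ω + (1 + δ) * ν * (1 / cos ω)) := by
  refine mul_right_cancel₀ hω ?_
  rw [mul_cos_eq C δ ν hω]
  unfold gap at h
  linarith

theorem omegaSup_eq_sSup_gap (δ ν : ℝ) :
    omegaSup δ ν =
      sSup {ω | ω ∈ Ico 0 (π / 2) ∧ 0 ≤ gap (Cdelta δ * δ) (Cdelta δ * (1 + δ) * ν) ω} := by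
  unfold omegaSup
  congr 1
  ext ω
  refine and_congr_right fun hω => arcsin_le_iff_gap_nonneg _ _ _ ⟨?_, hω.2⟩
  linarith [hω.1, pi_pos]

theorem sqrt_two_div_one_sub_sq_le {δ : ℝ} (hδ0 : 0 ≤ δ) (hδ : δ ≤ 0.04) :
    √(2 / (1 - δ ^ 2)) ≤ 1.416 := by
  rw [sqrt_le_iff, div_le_iff₀ (by nlinarith)]
  constructor <;> nlinarith

theorem Cdelta_pos {δ : ℝ} (hδ0 : 0 ≤ δ) (hδ : δ ≤ 0.04) : 0 < Cdelta δ := by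
  have hs := sqrt_two_div_one_sub_sq_le hδ0 hδ
  have hden : 0 < 1 - √(2 / (1 - δ ^ 2)) * δ := by nlinarith
  have hinv : 0 < 1 / (1 - δ) := one_div_pos.2 (by linarith)
  unfold Cdelta
  positivity

theorem Cdelta_le {δ : ℝ} (hδ0 : 0 ≤ δ) (hδ : δ ≤ 0.04) : Cdelta δ ≤ 2.88 := by
  have hs := sqrt_two_div_one_sub_sq_le hδ0 hδ
  have hinv : 1 / (1 - δ) ≤ 1 / 0.96 := one_div_le_one_div_of_le (by norm_num) (by linarith)
  unfold Cdelta
  rw [div_le_iff₀ (by nlinarith)]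
  nlinarith [sqrt_nonneg (2 / (1 - δ ^ 2))]

end OmegaSup

open OmegaSup in
theorem omegaSup_fixed_point (δ ν : ℝ) (hδ0 : 0 < δ) (hδ : δ ≤ 0.04)
    (hν0 : 0 ≤ ν) (hν : ν ≤ 0.04) :
    omegaSup δ ν < Real.pi / 2 ∧
    Real.sin (omegaSup δ ν) =
      Cdelta δ * (δ * Real.tan (omegaSup δ ν) +
        (1 + δ) * ν * (1 / Real.cos (omegaSup δ ν))) ∧
    omegaSup δ ν =
      Real.arcsin (Cdelta δ * (δ * Real.tan (omegaSup δ ν) +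
        (1 + δ) * ν * (1 / Real.cos (omegaSup δ ν)))) := by
  have hC0 := Cdelta_pos hδ0.le hδ
  have hC := Cdelta_le hδ0.le hδ
  set C := Cdelta δ
  have ha : 0 < C * δ := by positivity
  have hb : 0 ≤ C * (1 + δ) * ν := by positivity
  have hab : C * δ + C * (1 + δ) * ν ≤ 1 / 2 := by nlinarith [mul_nonneg hC0.le hν0]
  have hpi4 : π / 4 ∈ {ω | ω ∈ Ico 0 (π / 2) ∧ 0 ≤ gap (C * δ) (C * (1 + δ) * ν) ω} :=
    ⟨⟨by positivity, by linarith [pi_pos]⟩, gap_pi_div_four_nonneg ha.le hab⟩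
  have hlt : omegaSup δ ν < π / 2 := by
    rw [omegaSup_eq_sSup_gap]
    refine (csSup_le ⟨_, hpi4⟩ fun ω hω => ?_).trans_lt (arccos_lt_pi_div_two.2 ha)
    exact le_arccos_of_gap_nonneg (by linarith) (by linarith) hb
      ⟨hω.1.1, hω.1.2.trans (by linarith [pi_pos])⟩ hω.2
  have hgap : gap (C * δ) (C * (1 + δ) * ν) (omegaSup δ ν) = 0 := by
    rw [omegaSup_eq_sSup_gap] at hlt ⊢
    exact (continuous_gap _ _).apply_sSup_Ico_eq_zero ⟨_, hpi4⟩ hlt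
  have hnonneg : 0 ≤ omegaSup δ ν := by
    rw [omegaSup_eq_sSup_gap]
    exact hpi4.1.1.trans (le_csSup ⟨π / 2, fun ω hω => hω.1.2.le⟩ hpi4)
  have hsin := sin_eq_of_gap_eq_zero C δ ν
    (cos_pos_of_mem_Ioo ⟨by linarith [pi_pos], hlt⟩).ne' hgap
  exact ⟨hlt, hsin, by rw [← hsin, arcsin_sin (by linarith [pi_pos]) hlt.le]⟩
end

section
/- Suppose 𝒜 has the (3s₁,3s₂,2)-restricted isometry property with constant δ > 0. Then for every z ∈ ℂ^m and all index sets J₁ ⊆ [n₁], J₂ ⊆ [n₂] with |J₁| ≤ s₁ and |J₂| ≤ s₂, the spectral-norm bound ‖Π_{J₁}·𝒜*(z)·Π_{J₂}‖ ≤ √(1+δ)·‖z‖ holds. -/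
open scoped BigOperators
noncomputable section
open Classical

/-- The ℓ₂ norm of a vector in ℂ^n. -/
def l2norm {n : ℕ} (x : Fin n → ℂ) : ℝ := Real.sqrt (∑ i, ‖x i‖ ^ 2)

/-- The Frobenius norm of a matrix. -/
def frobNorm {n₁ n₂ : ℕ} (X : Matrix (Fin n₁) (Fin n₂) ℂ) : ℝ :=
  Real.sqrt (∑ i, ∑ j, ‖X i j‖ ^ 2)

/-- The spectral norm (ℓ₂ operator norm) of a matrix. -/
def specNorm {n₁ n₂ : ℕ} (X : Matrix (Fin n₁) (Fin n₂) ℂ) : ℝ :=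
  sSup {c : ℝ | ∃ x : Fin n₂ → ℂ, l2norm x = 1 ∧ c = l2norm (X.mulVec x)}

/-- A vector is `s`-sparse if it has at most `s` nonzero entries. -/
def Sparse {n : ℕ} (s : ℕ) (x : Fin n → ℂ) : Prop :=
  {i | x i ≠ 0}.ncard ≤ s

/-- The linear map 𝒜 determined by the matrices A₁, …, A_m. -/
def opA {n₁ n₂ m : ℕ} (A : Fin m → Matrix (Fin n₁) (Fin n₂) ℂ)
    (X : Matrix (Fin n₁) (Fin n₂) ℂ) : Fin m → ℂ :=
  fun ℓ => ((A ℓ).conjTranspose * X).trace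

/-- The adjoint 𝒜* of 𝒜 with respect to the Frobenius inner product. -/
def opAadj {n₁ n₂ m : ℕ} (A : Fin m → Matrix (Fin n₁) (Fin n₂) ℂ)
    (z : Fin m → ℂ) : Matrix (Fin n₁) (Fin n₂) ℂ :=
  ∑ ℓ, z ℓ • A ℓ

/-- The (s₁, s₂, r)-restricted isometry property with constant δ. -/
def RIP {n₁ n₂ m : ℕ} (A : Fin m → Matrix (Fin n₁) (Fin n₂) ℂ)
    (s₁ s₂ r : ℕ) (δ : ℝ) : Prop :=
  ∀ X : Matrix (Fin n₁) (Fin n₂) ℂ, X.rank ≤ r →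
    {i | X i ≠ 0}.ncard ≤ s₁ → {j | X.transpose j ≠ 0}.ncard ≤ s₂ →
    (1 - δ) * frobNorm X ^ 2 ≤ l2norm (opA A X) ^ 2 ∧
      l2norm (opA A X) ^ 2 ≤ (1 + δ) * frobNorm X ^ 2

/-- The diagonal 0/1 projection matrix onto the coordinates in `J`. -/
def proj {n : ℕ} (J : Finset (Fin n)) : Matrix (Fin n) (Fin n) ℂ :=
  Matrix.diagonal fun i => if i ∈ J then 1 else 0

/-- The outer product u v^*. -/
def outer {n₁ n₂ : ℕ} (u : Fin n₁ → ℂ) (v : Fin n₂ → ℂ) :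
    Matrix (Fin n₁) (Fin n₂) ℂ :=
  Matrix.of fun i j => u i * star (v j)

/-- The norm ‖x‖_[k] : the ℓ₂ norm of the best k-sparse approximation of x. -/
def knorm {n : ℕ} (k : ℕ) (x : Fin n → ℂ) : ℝ :=
  sSup {c : ℝ | ∃ I : Finset (Fin n), I.card = k ∧ c = Real.sqrt (∑ i ∈ I, ‖x i‖ ^ 2)}

/-- The ℓ∞ norm of a vector. -/
def linftyNorm {n : ℕ} (x : Fin n → ℂ) : ℝ :=
  sSup {c : ℝ | ∃ i, c = ‖x i‖}

/-- The sine of the angle between two unit vectors. -/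
def sinAngle {n : ℕ} (w v : Fin n → ℂ) : ℝ :=
  Real.sqrt (1 - ‖∑ i, star (w i) * v i‖ ^ 2)


lemma l2norm_nonneg {n : ℕ} (x : Fin n → ℂ) : 0 ≤ l2norm x := Real.sqrt_nonneg _

lemma l2norm_sq {n : ℕ} (x : Fin n → ℂ) : l2norm x ^ 2 = ∑ i, ‖x i‖ ^ 2 :=
  Real.sq_sqrt (Finset.sum_nonneg fun i _ => sq_nonneg _)

lemma frob_outer {n₁ n₂ : ℕ} (u : Fin n₁ → ℂ) (v : Fin n₂ → ℂ) :
    frobNorm (outer u v) = l2norm u * l2norm v := by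
  have h : ∑ i, ∑ j, ‖(outer u v) i j‖ ^ 2 = (∑ i, ‖u i‖ ^ 2) * (∑ j, ‖v j‖ ^ 2) := by
    rw [Finset.sum_mul]
    refine Finset.sum_congr rfl fun i _ => ?_
    rw [Finset.mul_sum]
    refine Finset.sum_congr rfl fun j _ => ?_
    simp [outer, norm_mul, mul_pow]
  rw [frobNorm, h, Real.sqrt_mul (Finset.sum_nonneg fun i _ => sq_nonneg _)]
  rfl

lemma key_bound {n₁ n₂ m s₁ s₂ : ℕ} (δ : ℝ) (hδ : 0 < δ)
    (A : Fin m → Matrix (Fin n₁) (Fin n₂) ℂ)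
    (hRIP : RIP A (3 * s₁) (3 * s₂) 2 δ)
    (z : Fin m → ℂ)
    (J₁ : Finset (Fin n₁)) (hJ₁ : J₁.card ≤ s₁)
    (J₂ : Finset (Fin n₂)) (hJ₂ : J₂.card ≤ s₂)
    (u : Fin n₁ → ℂ) (v : Fin n₂ → ℂ)
    (hu : ∀ i ∉ J₁, u i = 0) (hv : ∀ j ∉ J₂, v j = 0) :
    ‖∑ i, ∑ j, (starRingEnd ℂ) (u i) * opAadj A z i j * v j‖ ≤
      Real.sqrt (1 + δ) * l2norm z * (l2norm u * l2norm v) := by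
  set X := outer u v with hX
  have hrank : X.rank ≤ 2 := by
    have he : X = Matrix.vecMulVec u (fun j => star (v j)) := rfl
    rw [he, Matrix.vecMulVec_eq Unit]
    exact (Matrix.rank_mul_le_left _ _).trans
      (((Matrix.rank_le_card_width _).trans (by simp)).trans one_le_two)
  have hrow : {i | X i ≠ 0}.ncard ≤ 3 * s₁ := by
    have hsub : {i | X i ≠ 0} ⊆ (J₁ : Set (Fin n₁)) := by
      intro i hi
      by_contra hmem
      exact hi (by funext j; simp [hX, outer, hu i hmem])
    calc {i | X i ≠ 0}.ncard ≤ (J₁ : Set (Fin n₁)).ncard :=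
          Set.ncard_le_ncard hsub (Set.toFinite _)
      _ = J₁.card := Set.ncard_coe_finset _
      _ ≤ 3 * s₁ := hJ₁.trans (by omega)
  have hcol : {j | X.transpose j ≠ 0}.ncard ≤ 3 * s₂ := by
    have hsub : {j | X.transpose j ≠ 0} ⊆ (J₂ : Set (Fin n₂)) := by
      intro j hj
      by_contra hmem
      exact hj (by funext i; simp [hX, outer, Matrix.transpose_apply, hv j hmem])
    calc {j | X.transpose j ≠ 0}.ncard ≤ (J₂ : Set (Fin n₂)).ncard :=
          Set.ncard_le_ncard hsub (Set.toFinite _)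
      _ = J₂.card := Set.ncard_coe_finset _
      _ ≤ 3 * s₂ := hJ₂.trans (by omega)
  have hrip := (hRIP X hrank hrow hcol).2
  set w := opA A X with hw
  have hAdj : ∀ i j, opAadj A z i j = ∑ ℓ, z ℓ * A ℓ i j := by
    intro i j; simp [opAadj, Matrix.sum_apply]
  have hwℓ : ∀ ℓ, w ℓ = ∑ i, ∑ j, (starRingEnd ℂ) (A ℓ i j) * (u i * (starRingEnd ℂ) (v j)) := by
    intro ℓ
    simp only [hw, opA, hX, outer, Matrix.trace, Matrix.diag, Matrix.mul_apply,
      Matrix.conjTranspose_apply, Matrix.of_apply]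
    rw [Finset.sum_comm]
    refine Finset.sum_congr rfl fun i _ => Finset.sum_congr rfl fun j _ => ?_
    simp only [Complex.star_def]
    try ring
  have hid : ∑ i, ∑ j, (starRingEnd ℂ) (u i) * opAadj A z i j * v j
      = ∑ ℓ, z ℓ * (starRingEnd ℂ) (w ℓ) := by
    calc ∑ i, ∑ j, (starRingEnd ℂ) (u i) * opAadj A z i j * v j
        = ∑ i, ∑ j, ∑ ℓ, z ℓ * (A ℓ i j * ((starRingEnd ℂ) (u i) * v j)) := by
          refine Finset.sum_congr rfl fun i _ => Finset.sum_congr rfl fun j _ => ?_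
          rw [hAdj, Finset.mul_sum, Finset.sum_mul]
          exact Finset.sum_congr rfl fun ℓ _ => by ring
      _ = ∑ i, ∑ ℓ, ∑ j, z ℓ * (A ℓ i j * ((starRingEnd ℂ) (u i) * v j)) :=
          Finset.sum_congr rfl fun i _ => Finset.sum_comm
      _ = ∑ ℓ, ∑ i, ∑ j, z ℓ * (A ℓ i j * ((starRingEnd ℂ) (u i) * v j)) :=
          Finset.sum_comm
      _ = ∑ ℓ, z ℓ * (starRingEnd ℂ) (w ℓ) := by
          refine Finset.sum_congr rfl fun ℓ _ => ?_
          rw [hwℓ, map_sum, Finset.mul_sum]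
          refine Finset.sum_congr rfl fun i _ => ?_
          rw [map_sum, Finset.mul_sum]
          refine Finset.sum_congr rfl fun j _ => ?_
          simp only [map_mul, Complex.conj_conj]
          try ring
  rw [hid]
  have hcs : ‖∑ ℓ, z ℓ * (starRingEnd ℂ) (w ℓ)‖ ≤ l2norm z * l2norm w := by
    calc ‖∑ ℓ, z ℓ * (starRingEnd ℂ) (w ℓ)‖ ≤ ∑ ℓ, ‖z ℓ * (starRingEnd ℂ) (w ℓ)‖ :=
          norm_sum_le _ _
      _ = ∑ ℓ, ‖z ℓ‖ * ‖w ℓ‖ := by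
          refine Finset.sum_congr rfl fun ℓ _ => ?_
          rw [norm_mul, RCLike.norm_conj]
      _ ≤ Real.sqrt (∑ ℓ, ‖z ℓ‖ ^ 2) * Real.sqrt (∑ ℓ, ‖w ℓ‖ ^ 2) :=
          Real.sum_mul_le_sqrt_mul_sqrt _ _ _
      _ = l2norm z * l2norm w := rfl
  refine hcs.trans ?_
  have hδ1 : (0:ℝ) ≤ 1 + δ := by linarith
  have hF : (0:ℝ) ≤ frobNorm X := Real.sqrt_nonneg _
  have hwle : l2norm w ≤ Real.sqrt (1 + δ) * frobNorm X := by
    rw [(Real.sqrt_sq (l2norm_nonneg w)).symm]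
    calc Real.sqrt (l2norm w ^ 2) ≤ Real.sqrt ((1 + δ) * frobNorm X ^ 2) :=
          Real.sqrt_le_sqrt hrip
      _ = Real.sqrt (1 + δ) * frobNorm X := by
          rw [Real.sqrt_mul hδ1, Real.sqrt_sq hF]
  calc l2norm z * l2norm w ≤ l2norm z * (Real.sqrt (1 + δ) * frobNorm X) :=
        mul_le_mul_of_nonneg_left hwle (l2norm_nonneg _)
    _ = Real.sqrt (1 + δ) * l2norm z * (l2norm u * l2norm v) := by
        rw [frob_outer]; ring

/-- Lemma A.3 in Lee–Wu–Bresler: the adjoint applied to noise is small on sparse blocks. -/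
theorem rip_adjoint_noise_bound {n₁ n₂ m s₁ s₂ : ℕ} (δ : ℝ) (hδ : 0 < δ)
    (A : Fin m → Matrix (Fin n₁) (Fin n₂) ℂ)
    (hRIP : RIP A (3 * s₁) (3 * s₂) 2 δ)
    (z : Fin m → ℂ)
    (J₁ : Finset (Fin n₁)) (hJ₁ : J₁.card ≤ s₁)
    (J₂ : Finset (Fin n₂)) (hJ₂ : J₂.card ≤ s₂) :
    specNorm (proj J₁ * opAadj A z * proj J₂) ≤ Real.sqrt (1 + δ) * l2norm z := by
  set B := opAadj A z with hB
  set M := proj J₁ * B * proj J₂ with hM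
  set C := Real.sqrt (1 + δ) * l2norm z with hC
  have hC0 : 0 ≤ C := mul_nonneg (Real.sqrt_nonneg _) (l2norm_nonneg _)
  refine Real.sSup_le ?_ hC0
  rintro c ⟨x, hx1, rfl⟩
  -- entries of M
  have hMij : ∀ i j, M i j = (if i ∈ J₁ then (1:ℂ) else 0) * B i j * (if j ∈ J₂ then 1 else 0) := by
    intro i j
    simp [hM, proj, Matrix.mul_apply, Matrix.diagonal, Finset.sum_ite_eq, Finset.sum_ite_eq']
  set y := M.mulVec x with hy
  have hyJ : ∀ i ∉ J₁, y i = 0 := by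
    intro i hi
    have hyi : y i = ∑ j, M i j * x j := rfl
    rw [hyi]
    refine Finset.sum_eq_zero fun j _ => ?_
    rw [hMij i j, if_neg hi]
    ring
  set v : Fin n₂ → ℂ := fun j => if j ∈ J₂ then x j else 0 with hv
  have hvJ : ∀ j ∉ J₂, v j = 0 := fun j hj => by simp [hv, hj]
  -- main identity
  have hident : ((∑ i, ‖y i‖ ^ 2 : ℝ) : ℂ) = ∑ i, ∑ j, (starRingEnd ℂ) (y i) * B i j * v j := by
    push_cast
    calc ((∑ i, (‖y i‖:ℂ) ^ 2)) = ∑ i, (starRingEnd ℂ) (y i) * y i := by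
          refine Finset.sum_congr rfl fun i _ => ?_
          rw [RCLike.conj_mul]
          norm_cast
      _ = ∑ i, ∑ j, (starRingEnd ℂ) (y i) * (M i j * x j) := by
          refine Finset.sum_congr rfl fun i _ => ?_
          rw [show y i = ∑ j, M i j * x j from rfl, Finset.mul_sum]
      _ = ∑ i, ∑ j, (starRingEnd ℂ) (y i) * B i j * v j := by
          refine Finset.sum_congr rfl fun i _ => Finset.sum_congr rfl fun j _ => ?_
          by_cases hj : j ∈ J₂
          · by_cases hi : i ∈ J₁
            · rw [hMij i j, if_pos hi, if_pos hj]
              simp only [hv, if_pos hj]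
              ring
            · rw [hyJ i hi]
              simp
          · rw [hMij i j, if_neg hj, hvJ j hj]
            ring
  -- the squared norm bound
  have hsq : l2norm y ^ 2 ≤ C * (l2norm y * l2norm v) := by
    have h1 : l2norm y ^ 2 = ‖((∑ i, ‖y i‖ ^ 2 : ℝ) : ℂ)‖ := by
      rw [l2norm_sq, Complex.norm_real,
        Real.norm_of_nonneg (Finset.sum_nonneg fun i _ => sq_nonneg _)]
    rw [h1, hident]
    exact key_bound δ hδ A hRIP z J₁ hJ₁ J₂ hJ₂ y v hyJ hvJ
  have hvle : l2norm v ≤ 1 := by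
    have : ∑ j, ‖v j‖ ^ 2 ≤ ∑ j, ‖x j‖ ^ 2 := by
      refine Finset.sum_le_sum fun j _ => ?_
      by_cases hj : j ∈ J₂ <;> simp [hv, hj, sq_nonneg]
    calc l2norm v ≤ Real.sqrt (∑ j, ‖x j‖ ^ 2) := Real.sqrt_le_sqrt this
      _ = l2norm x := rfl
      _ = 1 := hx1
  by_cases hy0 : l2norm y = 0
  · rw [hy0]; exact hC0
  · have hypos : 0 < l2norm y := lt_of_le_of_ne (l2norm_nonneg y) (Ne.symm hy0)
    have h2 : l2norm y * l2norm y ≤ C * l2norm y := by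
      calc l2norm y * l2norm y = l2norm y ^ 2 := (sq (l2norm y)).symm
        _ ≤ C * (l2norm y * l2norm v) := hsq
        _ ≤ C * (l2norm y * 1) := by
            exact mul_le_mul_of_nonneg_left
              (mul_le_mul_of_nonneg_left hvle (l2norm_nonneg y)) hC0
        _ = C * l2norm y := by ring
    exact le_of_mul_le_mul_right (by linarith [h2]) hypos

end
end

section
/- Let u ∈ ℂ^n with ‖u‖ = 1, let k ∈ [n] and 0 < ξ ≤ 1 with ‖u‖_[k] ≥ ξ, and let t be a real number with 0 ≤ t ≤ ξ/√(2k). Then Σ_{j : |u_j| ≥ t} |u_j|² ≥ ξ²/2; in particular, ‖Π_J u‖ ≥ ξ/√2 for J := {j ∈ [n] : |u_j| ≥ t}. -/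
open scoped BigOperators
noncomputable section
open Classical

/-! Choose a `k`-set `I` carrying mass at least `ξ²`. Its entries of modulus below `t` number at most
`k` and each has squared modulus at most `ξ² / (2k)`, so they carry at most `ξ² / 2`; the remaining
entries of `I` lie in `J` and carry the other `ξ² / 2`. -/

lemma l2norm_proj_mulVec {n : ℕ} (J : Finset (Fin n)) (x : Fin n → ℂ) :
    l2norm ((proj J).mulVec x) = Real.sqrt (∑ j ∈ J, ‖x j‖ ^ 2) := by
  simp [l2norm, proj, Matrix.mulVec_diagonal, apply_ite, Finset.sum_ite_mem]

lemma exists_card_eq_le_sqrt_sum_of_le_knorm {n k : ℕ} {x : Fin n → ℂ} {ξ : ℝ} (hξ : 0 < ξ)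
    (h : ξ ≤ knorm k x) :
    ∃ I : Finset (Fin n), I.card = k ∧ ξ ≤ Real.sqrt (∑ i ∈ I, ‖x i‖ ^ 2) := by
  set S := {c : ℝ | ∃ I : Finset (Fin n), I.card = k ∧ c = Real.sqrt (∑ i ∈ I, ‖x i‖ ^ 2)}
  have hS_finite : S.Finite :=
    (Set.finite_range fun I : Finset (Fin n) => Real.sqrt (∑ i ∈ I, ‖x i‖ ^ 2)).subset
      fun _ ⟨I, _, hc⟩ => ⟨I, hc.symm⟩
  obtain hS_empty | hS_nonempty := S.eq_empty_or_nonempty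
  · have : knorm k x = sSup S := rfl
    rw [this, hS_empty, Real.sSup_empty] at h
    exact absurd h (not_le.mpr hξ)
  obtain ⟨I, hI, hval⟩ := hS_nonempty.csSup_mem hS_finite
  exact ⟨I, hI, hval ▸ h⟩

lemma sum_sq_filter_norm_lt_le {n : ℕ} (x : Fin n → ℂ) (I : Finset (Fin n)) {t s : ℝ}
    (hts : t ≤ s) :
    ∑ i ∈ I.filter (fun i => ‖x i‖ < t), ‖x i‖ ^ 2 ≤ I.card * s ^ 2 := by
  calc ∑ i ∈ I.filter (fun i => ‖x i‖ < t), ‖x i‖ ^ 2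
      ≤ ∑ _i ∈ I.filter (fun i => ‖x i‖ < t), s ^ 2 := by
        refine Finset.sum_le_sum fun i hi => ?_
        exact pow_le_pow_left₀ (norm_nonneg _) ((Finset.mem_filter.mp hi).2.le.trans hts) 2
    _ ≤ I.card * s ^ 2 := by
        rw [Finset.sum_const, nsmul_eq_mul]
        gcongr
        exact Finset.filter_subset _ _

lemma natCast_mul_div_sqrt_two_mul_sq_le (k : ℕ) (ξ : ℝ) :
    (k : ℝ) * (ξ / Real.sqrt (2 * k)) ^ 2 ≤ ξ ^ 2 / 2 := by
  rcases Nat.eq_zero_or_pos k with rfl | hk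
  · rw [Nat.cast_zero, zero_mul]
    positivity
  · rw [div_pow, Real.sq_sqrt (by positivity)]
    exact le_of_eq (by field_simp)

theorem large_entries_capture_mass_general {n : ℕ} (u : Fin n → ℂ)
    (k : ℕ)
    (ξ : ℝ) (hξ0 : 0 < ξ) (hknorm : ξ ≤ knorm k u)
    (t : ℝ) (ht : t ≤ ξ / Real.sqrt (2 * k)) :
    ξ ^ 2 / 2 ≤ ∑ j ∈ Finset.univ.filter (fun j => t ≤ ‖u j‖), ‖u j‖ ^ 2 ∧
      ξ / Real.sqrt 2 ≤
        l2norm ((proj (Finset.univ.filter fun j => t ≤ ‖u j‖)).mulVec u) := by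
  obtain ⟨I, hI, hξI⟩ := exists_card_eq_le_sqrt_sum_of_le_knorm hξ0 hknorm
  have hmass_I : ξ ^ 2 ≤ ∑ i ∈ I, ‖u i‖ ^ 2 :=
    (Real.le_sqrt' hξ0).mp hξI
  have hsmall := sum_sq_filter_norm_lt_le u I ht
  rw [hI] at hsmall
  have hlarge : ∑ i ∈ I.filter (fun i => t ≤ ‖u i‖), ‖u i‖ ^ 2 ≤
      ∑ j ∈ Finset.univ.filter (fun j => t ≤ ‖u j‖), ‖u j‖ ^ 2 :=
    Finset.sum_le_sum_of_subset_of_nonneg (Finset.filter_subset_filter _ I.subset_univ)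
      fun _ _ _ => sq_nonneg _
  have hsplit := Finset.sum_filter_add_sum_filter_not I (fun i => t ≤ ‖u i‖) (‖u ·‖ ^ 2)
  simp only [not_le] at hsplit
  have hmass : ξ ^ 2 / 2 ≤ ∑ j ∈ Finset.univ.filter (fun j => t ≤ ‖u j‖), ‖u j‖ ^ 2 := by
    linarith [natCast_mul_div_sqrt_two_mul_sq_le k ξ]
  refine ⟨hmass, ?_⟩
  rw [l2norm_proj_mulVec]
  refine (Real.le_sqrt' (by positivity)).mpr ?_
  rwa [div_pow, Real.sq_sqrt zero_le_two]

/-- If a unit vector has at least ξ of its mass in its k largest entries, then the entries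
of modulus at least t ≤ ξ/√(2k) carry at least ξ²/2 of its mass. -/
theorem large_entries_capture_mass {n : ℕ} (u : Fin n → ℂ) (hu : l2norm u = 1)
    (k : ℕ) (hk1 : 1 ≤ k) (hkn : k ≤ n)
    (ξ : ℝ) (hξ0 : 0 < ξ) (hξ1 : ξ ≤ 1) (hknorm : ξ ≤ knorm k u)
    (t : ℝ) (ht0 : 0 ≤ t) (ht : t ≤ ξ / Real.sqrt (2 * k)) :
    ξ ^ 2 / 2 ≤ ∑ j ∈ Finset.univ.filter (fun j => t ≤ ‖u j‖), ‖u j‖ ^ 2 ∧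
      ξ / Real.sqrt 2 ≤
        l2norm ((proj (Finset.univ.filter fun j => t ≤ ‖u j‖)).mulVec u) :=
  large_entries_capture_mass_general u k ξ hξ0 hknorm t ht

end
end
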